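/- Laplace-type ratio estimate used in the proof of Lemma 2.1 of the paper: fix real numbers a > 0, θ₂ > 0, β̃ ≤ 1 and δ ∈ (0,1), and let S(x) := β̃x + log(1-x) for x ∈ [0,1). Then lim_{n→∞} [∫_δ^1 e^{n·S(x)} x^{a-1}(1-x)^{θ₂-1} dx] / [∫_0^1 e^{n·S(x)} x^{a-1}(1-x)^{θ₂-1} dx] = 0, where n ranges over the natural numbers. -/

import Mathlib

/-!
Since `S` is strictly decreasing, pick `m ∈ (0, δ)`. On `[δ, 1)` the factor `e^{nS}` is at
most `e^{nS(δ)}`, while on `[0, m]` it is at least `e^{nS(m)}`; hence the ratio is at most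
`e^{n(S(δ) - S(m))} · (∫_δ^1 w) / (∫_0^m w)` for the weight `w(x) = x^{a-1}(1-x)^{θ₂-1}`,
which tends to `0`. Integrability of `w` is the convergence of Euler's beta integral, and the
boundedness of `e^{nS}` on `[0, 1)` makes the weighted integrands integrable.
-/

open Real Filter Topology MeasureTheory Set

theorem IntervalIntegrable.exp_mul_of_antitoneOn {S g : ℝ → ℝ} {l r t : ℝ} (hlr : l ≤ r)
    (hS : AntitoneOn S (Ico l r)) (ht : 0 ≤ t) (hg : IntervalIntegrable g volume l r) :
    IntervalIntegrable (fun x => exp (t * S x) * g x) volume l r := by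
  rw [intervalIntegrable_iff_integrableOn_Ico_of_le hlr] at hg ⊢
  refine hg.bdd_mul (c := exp (t * S l)) ?_ ?_
  · exact (measurable_exp.comp_aemeasurable
      ((aemeasurable_restrict_of_antitoneOn measurableSet_Ico hS).const_mul t)).aestronglyMeasurable
  · refine ae_restrict_of_forall_mem measurableSet_Ico fun x hx => ?_
    rw [norm_of_nonneg (exp_pos _).le, exp_le_exp]
    exact mul_le_mul_of_nonneg_left (hS ⟨le_rfl, hx.1.trans_lt hx.2⟩ hx hx.1) ht

theorem ae_restrict_Icc_of_forall_mem_Ioo {p : ℝ → Prop} {a b : ℝ}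
    (h : ∀ x ∈ Ioo a b, p x) : ∀ᵐ x ∂volume.restrict (Icc a b), p x :=
  (ae_restrict_congr_set Ioo_ae_eq_Icc).1 (ae_restrict_of_forall_mem measurableSet_Ioo h)

section Laplace

variable {S g : ℝ → ℝ} {l r δ t : ℝ}

theorem integral_exp_mul_le_of_antitoneOn (hS : AntitoneOn S (Ico l r))
    (hg : IntervalIntegrable g volume l r) (hg_nonneg : ∀ x ∈ Ioo l r, 0 ≤ g x)
    (hlδ : l ≤ δ) (hδr : δ < r) (ht : 0 ≤ t) :
    ∫ x in δ..r, exp (t * S x) * g x ≤ exp (t * S δ) * ∫ x in δ..r, g x := by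
  have hsub : uIcc δ r ⊆ uIcc l r := uIcc_subset_uIcc_right (mem_uIcc_of_le hlδ hδr.le)
  rw [← intervalIntegral.integral_const_mul]
  refine intervalIntegral.integral_mono_ae_restrict hδr.le
    ((hg.exp_mul_of_antitoneOn (hlδ.trans hδr.le) hS ht).mono_set hsub)
    ((hg.mono_set hsub).const_mul _) (ae_restrict_Icc_of_forall_mem_Ioo fun x hx => ?_)
  refine mul_le_mul_of_nonneg_right ?_ (hg_nonneg x ⟨hlδ.trans_lt hx.1, hx.2⟩)
  exact exp_le_exp.2 (mul_le_mul_of_nonneg_left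
    (hS ⟨hlδ, hδr⟩ ⟨hlδ.trans hx.1.le, hx.2⟩ hx.1.le) ht)

theorem exp_mul_mul_integral_le_of_antitoneOn (hS : AntitoneOn S (Ico l r))
    (hg : IntervalIntegrable g volume l r) (hg_nonneg : ∀ x ∈ Ioo l r, 0 ≤ g x)
    (hlδ : l ≤ δ) (hδr : δ < r) (ht : 0 ≤ t) :
    exp (t * S δ) * ∫ x in l..δ, g x ≤ ∫ x in l..r, exp (t * S x) * g x := by
  have hF := hg.exp_mul_of_antitoneOn (hlδ.trans hδr.le) hS ht
  have hsub : uIcc l δ ⊆ uIcc l r := uIcc_subset_uIcc_left (mem_uIcc_of_le hlδ hδr.le)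
  have hF_nonneg : ∀ x ∈ Ioo l r, 0 ≤ exp (t * S x) * g x :=
    fun x hx => mul_nonneg (exp_pos _).le (hg_nonneg x hx)
  calc exp (t * S δ) * ∫ x in l..δ, g x
      ≤ ∫ x in l..δ, exp (t * S x) * g x := by
        rw [← intervalIntegral.integral_const_mul]
        refine intervalIntegral.integral_mono_ae_restrict hlδ ((hg.mono_set hsub).const_mul _)
          (hF.mono_set hsub) (ae_restrict_Icc_of_forall_mem_Ioo fun x hx => ?_)
        refine mul_le_mul_of_nonneg_right ?_ (hg_nonneg x ⟨hx.1, hx.2.trans hδr⟩)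
        exact exp_le_exp.2 (mul_le_mul_of_nonneg_left
          (hS ⟨hx.1.le, hx.2.trans hδr⟩ ⟨hlδ, hδr⟩ hx.2.le) ht)
    _ ≤ ∫ x in l..r, exp (t * S x) * g x :=
        intervalIntegral.integral_mono_interval le_rfl hlδ hδr.le
          (ae_restrict_of_ae_restrict_of_subset Ioc_subset_Icc_self
            (ae_restrict_Icc_of_forall_mem_Ioo hF_nonneg)) hF

theorem integral_exp_mul_div_integral_le_of_antitoneOn (hS : AntitoneOn S (Ico l r))
    (hg : IntervalIntegrable g volume l r) (hg_pos : ∀ x ∈ Ioo l r, 0 < g x) {m : ℝ}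
    (hlm : l < m) (hmδ : m ≤ δ) (hδr : δ < r) (ht : 0 ≤ t) :
    (∫ x in δ..r, exp (t * S x) * g x) / (∫ x in l..r, exp (t * S x) * g x) ≤
      exp (t * (S δ - S m)) * ((∫ x in δ..r, g x) / ∫ x in l..m, g x) := by
  have hg_nonneg : ∀ x ∈ Ioo l r, 0 ≤ g x := fun x hx => (hg_pos x hx).le
  have hlδ : l < δ := hlm.trans_le hmδ
  have hmr : m < r := hmδ.trans_lt hδr
  have hc : 0 < ∫ x in l..m, g x :=
    intervalIntegral.intervalIntegral_pos_of_pos_on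
      (hg.mono_set (uIcc_subset_uIcc_left (mem_uIcc_of_le hlm.le hmr.le)))
      (fun x hx => hg_pos x ⟨hx.1, hx.2.trans hmr⟩) hlm
  have hC : 0 ≤ ∫ x in δ..r, g x :=
    intervalIntegral.integral_nonneg_of_ae_restrict hδr.le
      (ae_restrict_Icc_of_forall_mem_Ioo fun x hx => hg_nonneg x ⟨hlδ.trans hx.1, hx.2⟩)
  calc (∫ x in δ..r, exp (t * S x) * g x) / (∫ x in l..r, exp (t * S x) * g x)
      ≤ (exp (t * S δ) * ∫ x in δ..r, g x) / (exp (t * S m) * ∫ x in l..m, g x) :=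
        div_le_div₀ (by positivity)
          (integral_exp_mul_le_of_antitoneOn hS hg hg_nonneg hlδ.le hδr ht)
          (by positivity) (exp_mul_mul_integral_le_of_antitoneOn hS hg hg_nonneg hlm.le hmr ht)
    _ = exp (t * (S δ - S m)) * ((∫ x in δ..r, g x) / ∫ x in l..m, g x) := by
        rw [mul_div_mul_comm, ← exp_sub, mul_sub]

theorem tendsto_integral_exp_mul_div_integral_of_strictAntiOn (hS : StrictAntiOn S (Ico l r))
    (hg : IntervalIntegrable g volume l r) (hg_pos : ∀ x ∈ Ioo l r, 0 < g x)
    (hδ : δ ∈ Ioo l r) :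
    Tendsto (fun t => (∫ x in δ..r, exp (t * S x) * g x) / ∫ x in l..r, exp (t * S x) * g x)
      atTop (𝓝 0) := by
  obtain ⟨hlδ, hδr⟩ := hδ
  obtain ⟨m, hlm, hmδ⟩ := exists_between hlδ
  have hgap : S δ - S m < 0 :=
    sub_neg.2 (hS ⟨hlm.le, hmδ.trans hδr⟩ ⟨hlδ.le, hδr⟩ hmδ)
  have hbound : Tendsto
      (fun t => exp (t * (S δ - S m)) * ((∫ x in δ..r, g x) / ∫ x in l..m, g x))
      atTop (𝓝 0) := by
    simpa using (tendsto_exp_atBot.comp (tendsto_id.atTop_mul_const_of_neg hgap)).mul_const _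
  have hF_nonneg : ∀ t, ∀ x ∈ Ioo l r, 0 ≤ exp (t * S x) * g x :=
    fun t x hx => mul_nonneg (exp_pos _).le (hg_pos x hx).le
  refine squeeze_zero' (Eventually.of_forall fun t => div_nonneg ?_ ?_)
    ((eventually_ge_atTop 0).mono fun t ht => integral_exp_mul_div_integral_le_of_antitoneOn
      hS.antitoneOn hg hg_pos hlm hmδ.le hδr ht) hbound
  · exact intervalIntegral.integral_nonneg_of_ae_restrict hδr.le
      (ae_restrict_Icc_of_forall_mem_Ioo fun x hx => hF_nonneg t x ⟨hlδ.trans hx.1, hx.2⟩)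
  · exact intervalIntegral.integral_nonneg_of_ae_restrict (hlδ.trans hδr).le
      (ae_restrict_Icc_of_forall_mem_Ioo (hF_nonneg t))

end Laplace

theorem strictAntiOn_mul_add_log_one_sub {β : ℝ} (hβ : β ≤ 1) :
    StrictAntiOn (fun x => β * x + log (1 - x)) (Ico 0 1) := by
  rintro x ⟨hx0, hx1⟩ y ⟨-, hy1⟩ hxy
  have hx1' : 0 < 1 - x := by linarith
  have hy1' : 0 < 1 - y := by linarith
  have hlog : log ((1 - y) / (1 - x)) < (1 - y) / (1 - x) - 1 :=
    log_lt_sub_one_of_pos (by positivity) (by rw [ne_eq, div_eq_one_iff_eq hx1'.ne']; linarith)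
  have hratio : (1 - y) / (1 - x) - 1 ≤ x - y := by
    rw [div_sub_one hx1'.ne', div_le_iff₀ hx1']; nlinarith
  rw [log_div hy1'.ne' hx1'.ne'] at hlog
  simp only
  nlinarith

theorem intervalIntegrable_rpow_mul_one_sub_rpow {a b : ℝ} (ha : 0 < a) (hb : 0 < b) :
    IntervalIntegrable (fun x : ℝ => x ^ (a - 1) * (1 - x) ^ (b - 1)) volume 0 1 := by
  refine (Complex.betaIntegral_convergent (u := a) (v := b) (by simpa) (by simpa)).norm.congr_uIoo
    fun x hx => ?_
  rw [uIoo_of_le zero_le_one] at hx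
  have h1x : 0 < 1 - x := by linarith [hx.2]
  have hsub : (1 : ℂ) - x = ((1 - x : ℝ) : ℂ) := by push_cast; ring
  dsimp only
  rw [norm_mul, hsub, Complex.norm_cpow_eq_rpow_re_of_pos hx.1,
    Complex.norm_cpow_eq_rpow_re_of_pos h1x]
  simp

/-- Laplace-type ratio estimate used in the proof of Lemma 2.1: for `a > 0`,
`θ₂ > 0`, `β̃ ≤ 1`, `δ ∈ (0,1)`, and `S(x) = β̃x + log(1-x)`,
`lim_{n→∞} (∫_δ^1 e^{nS(x)} x^{a-1}(1-x)^{θ₂-1} dx)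
  / (∫_0^1 e^{nS(x)} x^{a-1}(1-x)^{θ₂-1} dx) = 0`. -/
theorem laplace_ratio_estimate (a θ₂ βt δ : ℝ)
    (ha : 0 < a) (hθ₂ : 0 < θ₂) (hβ : βt ≤ 1) (hδ : δ ∈ Set.Ioo (0:ℝ) 1) :
    Filter.Tendsto (fun n : ℕ =>
        (∫ x in δ..1,
            Real.exp ((n : ℝ) * (βt * x + Real.log (1 - x))) *
              x ^ (a - 1) * (1 - x) ^ (θ₂ - 1)) /
        (∫ x in (0:ℝ)..1,
            Real.exp ((n : ℝ) * (βt * x + Real.log (1 - x))) *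
              x ^ (a - 1) * (1 - x) ^ (θ₂ - 1)))
      Filter.atTop (𝓝 0) := by
  have h := tendsto_integral_exp_mul_div_integral_of_strictAntiOn
    (strictAntiOn_mul_add_log_one_sub hβ) (intervalIntegrable_rpow_mul_one_sub_rpow ha hθ₂)
    (fun x hx => mul_pos (rpow_pos_of_pos hx.1 _) (rpow_pos_of_pos (sub_pos.2 hx.2) _)) hδ
  simpa only [mul_assoc, Function.comp_def] using h.comp tendsto_natCast_atTop_atTop
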